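/- arXiv:2312.15978 — 2 statements merged into one kernel-verified Lean document; each statement's English description precedes it below -/
import Mathlib

section
/- Let Φ be a Young function, g : ℝⁿ → ℝ a convex function, and c₀ > 0 a constant with |g(ζ)| ≤ c₀·(1 + Φ(|ζ|)) for all ζ ∈ ℝⁿ. Then for all ζ, θ ∈ ℝⁿ one has |g(ζ) − g(θ)| ≤ 2·n·c₀ · (1 + Φ(2(1 + |ζ| + |θ|))) / (1 + |ζ| + |θ|) · |ζ − θ|. -/
/-!
A convex function bounded by `M` on a ball of radius `2R` is `2M/R`-Lipschitz on the concentric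
ball of radius `R`. Since a Young function is nondecreasing, the growth bound gives
`M = c₀ (1 + Φ (2R))`; take `R = 1 + |ζ| + |θ|`. The factor `n ≥ 1` only weakens the estimate.
-/

open Set Filter Topology MeasureTheory

/-- A Young function: continuous, convex on `[0,∞)`, vanishing only at `0`,
with `Φ(x)/x → 0` at `0⁺` and `Φ(x)/x → ∞` at `∞`. -/
def IsYoung (Φ : ℝ → ℝ) : Prop :=
  ContinuousOn Φ (Set.Ici 0) ∧ ConvexOn ℝ (Set.Ici 0) Φ ∧ Φ 0 = 0 ∧
  (∀ x > (0:ℝ), 0 < Φ x) ∧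
  Tendsto (fun x => Φ x / x) (nhdsWithin 0 (Set.Ioi 0)) (nhds 0) ∧
  Tendsto (fun x => Φ x / x) atTop atTop

/-- The Fenchel conjugate `Φ̃(y) = sup_{x ≥ 0} (x·y − Φ(x))`. -/
noncomputable def fenchel (Φ : ℝ → ℝ) (y : ℝ) : ℝ :=
  sSup {z | ∃ x ≥ (0:ℝ), z = x * y - Φ x}

theorem IsYoung.nonneg {Φ : ℝ → ℝ} (hY : IsYoung Φ) {x : ℝ} (hx : 0 ≤ x) : 0 ≤ Φ x := by
  rcases hx.eq_or_lt with rfl | hx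
  · exact hY.2.2.1.ge
  · exact (hY.2.2.2.1 x hx).le

theorem IsYoung.monotoneOn {Φ : ℝ → ℝ} (hY : IsYoung Φ) : MonotoneOn Φ (Ici 0) := by
  intro x hx y hy hxy
  rcases (mem_Ici.mp hx).eq_or_lt with rfl | hx_pos
  · rw [hY.2.2.1]
    exact hY.nonneg hy
  · refine hY.2.1.le_right_of_left_le'' self_mem_Ici hy hx_pos hxy ?_
    rw [hY.2.2.1]
    exact hY.nonneg hx_pos.le

theorem ConvexOn.abs_sub_le_of_abs_le_growth {E : Type*} [NormedAddCommGroup E]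
    [NormedSpace ℝ E] {g : E → ℝ} (hg : ConvexOn ℝ univ g) {Φ : ℝ → ℝ}
    (hΦ : MonotoneOn Φ (Ici 0)) {c₀ : ℝ} (hc₀ : 0 ≤ c₀)
    (hgrowth : ∀ ζ, |g ζ| ≤ c₀ * (1 + Φ ‖ζ‖)) (ζ θ : E) {R : ℝ} (hζ : ‖ζ‖ < R)
    (hθ : ‖θ‖ < R) :
    |g ζ - g θ| ≤ 2 * c₀ * ((1 + Φ (2 * R)) / R) * ‖ζ - θ‖ := by
  have hR : 0 < R := (norm_nonneg ζ).trans_lt hζ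
  set M := c₀ * (1 + Φ (2 * R))
  have hM : ∀ x, dist x 0 < 2 * R → |g x| ≤ M := fun x hx ↦ by
    rw [dist_zero_right] at hx
    refine (hgrowth x).trans (mul_le_mul_of_nonneg_left ?_ hc₀)
    gcongr
    exact hΦ (norm_nonneg x) (by simp only [mem_Ici]; positivity) hx.le
  have hLip := (hg.subset (subset_univ _) (convex_ball 0 (2 * R))).lipschitzOnWith_of_abs_le
    hR hM
  have hball : ∀ x : E, ‖x‖ < R → x ∈ Metric.ball 0 (2 * R - R) := fun x hx ↦ by
    rwa [mem_ball_zero_iff, two_mul, add_sub_cancel_right]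
  have hK : 0 ≤ 2 * M / R := by
    have := (abs_nonneg _).trans (hM 0 (by simpa))
    positivity
  calc |g ζ - g θ| = dist (g ζ) (g θ) := (Real.dist_eq _ _).symm
    _ ≤ (2 * M / R).toNNReal * dist ζ θ := hLip.dist_le_mul _ (hball ζ hζ) _ (hball θ hθ)
    _ = 2 * c₀ * ((1 + Φ (2 * R)) / R) * ‖ζ - θ‖ := by
      rw [Real.coe_toNNReal _ hK, dist_eq_norm]
      ring

/-- Continuity estimate for a convex function with Orlicz growth:
`|g(ζ) − g(θ)| ≤ 2·n·c₀·(1 + Φ(2(1+‖ζ‖+‖θ‖)))/(1+‖ζ‖+‖θ‖)·‖ζ−θ‖`. -/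
theorem stmt6 (n : ℕ) (Φ : ℝ → ℝ) (hY : IsYoung Φ)
    (g : EuclideanSpace ℝ (Fin n) → ℝ) (hg : ConvexOn ℝ Set.univ g)
    (c₀ : ℝ) (hc₀ : 0 < c₀) (hgrowth : ∀ ζ, |g ζ| ≤ c₀ * (1 + Φ ‖ζ‖)) :
    ∀ ζ θ : EuclideanSpace ℝ (Fin n),
      |g ζ - g θ| ≤ 2 * n * c₀ *
        ((1 + Φ (2 * (1 + ‖ζ‖ + ‖θ‖))) / (1 + ‖ζ‖ + ‖θ‖)) * ‖ζ - θ‖ := by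
  intro ζ θ
  have key := hg.abs_sub_le_of_abs_le_growth hY.monotoneOn hc₀.le hgrowth ζ θ
    (R := 1 + ‖ζ‖ + ‖θ‖) (by linarith [norm_nonneg θ]) (by linarith [norm_nonneg ζ])
  rcases n.eq_zero_or_pos with rfl | hn
  · simp [Subsingleton.elim ζ θ]
  · calc |g ζ - g θ| ≤ _ := key
      _ ≤ n * _ := le_mul_of_one_le_left ((abs_nonneg _).trans key) (by exact_mod_cast hn)
      _ = _ := by ring
end

section
/- Let Φ be a Young function with nondecreasing right derivative φ, and let g : ℝⁿ → ℝ be convex with |g(ζ)| ≤ c₀·(1 + Φ(|ζ|)) for all ζ. If Φ satisfies the Δ₂-condition for large arguments (there are k, δ > 0 with Φ(2t) ≤ k·Φ(t) for t ≥ δ), then there is a constant c₀'' > 0 (depending on c₀, n, k, Φ(δ)) such that |g(ζ) − g(θ)| ≤ c₀''·(1 + φ(1 + |ζ| + |θ|))·|ζ − θ| for all ζ, θ ∈ ℝⁿ. -/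
/-!
On the ball of radius `2r`, `r = 1 + |ζ| + |θ|`, the growth bound gives `|g| ≤ c₀ (1 + Φ(2r))`,
and a convex function bounded by `M` on a ball is `2M/r`-Lipschitz on the concentric ball
of radius `r`. The `Δ₂` condition turns `Φ(2r)` into `k Φ(r)` up to a constant, and convexity
of `Φ` with `Φ(0) = 0` gives `Φ(r) ≤ r φ(r)`, so that `2M/r ≲ 1 + φ(r)`.
-/

open Set Filter Topology MeasureTheory

open Metric

lemma ConvexOn.slope_le_of_hasDerivWithinAt_Ici {f : ℝ → ℝ} {a x y f' : ℝ}
    (hf : ConvexOn ℝ (Ici a) f) (hx : a ≤ x) (hxy : x < y)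
    (hf' : HasDerivWithinAt f f' (Ici y) y) : slope f x y ≤ f' := by
  refine ge_of_tendsto ((hasDerivWithinAt_iff_tendsto_slope' self_notMem_Ioi).mp
    (hf'.mono Ioi_subset_Ici_self)) ?_
  filter_upwards [self_mem_nhdsWithin] with t (hyt : y < t)
  simpa only [slope_def_field] using
    hf.slope_mono_adjacent (mem_Ici.mpr hx) (mem_Ici.mpr (hx.trans (hxy.trans hyt).le)) hxy hyt

namespace IsYoung

variable {Φ : ℝ → ℝ}

lemma nonneg_s8 (hY : IsYoung Φ) {x : ℝ} (hx : 0 ≤ x) : 0 ≤ Φ x := by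
  rcases hx.eq_or_lt with rfl | hx
  · exact hY.2.2.1.ge
  · exact (hY.2.2.2.1 x hx).le

lemma monotoneOn_s8 (hY : IsYoung Φ) : MonotoneOn Φ (Ici 0) := by
  intro x hx y hy hxy
  have hseg : x ∈ segment ℝ 0 y := by rw [segment_eq_Icc hy]; exact ⟨hx, hxy⟩
  simpa [hY.2.2.1, hY.nonneg_s8 hy] using hY.2.1.le_on_segment self_mem_Ici hy hseg

lemma apply_le_mul_of_hasDerivWithinAt (hY : IsYoung Φ) {t f' : ℝ} (ht : 0 < t)
    (hf' : HasDerivWithinAt Φ f' (Ici t) t) : Φ t ≤ t * f' := by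
  have h := hY.2.1.slope_le_of_hasDerivWithinAt_Ici le_rfl ht hf'
  rw [slope_def_field, hY.2.2.1, sub_zero, sub_zero, div_le_iff₀ ht] at h
  linarith

lemma apply_two_mul_le_of_Δ₂ (hY : IsYoung Φ) {k δ : ℝ} (hk : 0 ≤ k) (hδ : 0 ≤ δ)
    (hΔ₂ : ∀ t ≥ δ, Φ (2 * t) ≤ k * Φ t) {r : ℝ} (hr : 0 ≤ r) :
    Φ (2 * r) ≤ k * (Φ δ + Φ r) := by
  have hΦr := hY.nonneg_s8 hr
  have hΦδ := hY.nonneg_s8 hδ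
  rcases le_or_gt δ r with hδr | hrδ
  · nlinarith [hΔ₂ r hδr]
  · calc Φ (2 * r) ≤ Φ (2 * δ) :=
          hY.monotoneOn_s8 (mem_Ici.mpr (by positivity)) (mem_Ici.mpr (by positivity)) (by linarith)
      _ ≤ k * Φ δ := hΔ₂ δ le_rfl
      _ ≤ k * (Φ δ + Φ r) := by nlinarith

lemma one_add_apply_two_mul_le (hY : IsYoung Φ) {φ : ℝ → ℝ}
    (hφ : ∀ t ≥ (0:ℝ), HasDerivWithinAt Φ (φ t) (Ici t) t) {k δ : ℝ} (hk : 0 ≤ k) (hδ : 0 ≤ δ)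
    (hΔ₂ : ∀ t ≥ δ, Φ (2 * t) ≤ k * Φ t) {r : ℝ} (hr : 1 ≤ r) :
    1 + Φ (2 * r) ≤ (1 + k * (1 + Φ δ)) * ((1 + φ r) * r) := by
  have hr0 : 0 < r := by linarith
  have hΦr := hY.apply_le_mul_of_hasDerivWithinAt hr0 (hφ r hr0.le)
  have hrφ : 0 ≤ r * φ r := (hY.nonneg_s8 hr0.le).trans hΦr
  have hΦ2r := hY.apply_two_mul_le_of_Δ₂ hk hδ hΔ₂ hr0.le
  have hΦδ := hY.nonneg_s8 hδ
  nlinarith [mul_nonneg hk hrφ, mul_nonneg hk hΦδ, mul_nonneg (mul_nonneg hk hΦδ) hrφ,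
    mul_nonneg (mul_nonneg hk hΦδ) (sub_nonneg.mpr hr)]

end IsYoung

lemma ConvexOn.abs_sub_le_of_abs_le_on_ball {E : Type*} [NormedAddCommGroup E] [NormedSpace ℝ E]
    {g : E → ℝ} (hg : ConvexOn ℝ univ g) {r M : ℝ} (hr : 0 < r)
    (hM : ∀ x, ‖x‖ < 2 * r → |g x| ≤ M) {x y : E} (hx : ‖x‖ < r) (hy : ‖y‖ < r) :
    |g x - g y| ≤ 2 * M / r * ‖x - y‖ := by
  have hM0 : 0 ≤ M := (abs_nonneg _).trans (hM 0 (by simpa using hr))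
  have hlip := (hg.subset (subset_univ _) (convex_ball (0 : E) (2 * r))).lipschitzOnWith_of_abs_le
    hr fun a ha ↦ hM a (by simpa using ha)
  have hball : ∀ {z : E}, ‖z‖ < r → z ∈ ball (0 : E) (2 * r - r) := fun hz ↦ by
    simpa [two_mul] using hz
  simpa [Real.dist_eq, dist_eq_norm, Real.coe_toNNReal _ (by positivity : 0 ≤ 2 * M / r)] using
    hlip.dist_le_mul x (hball hx) y (hball hy)

theorem stmt8_general (n : ℕ) (Φ φ : ℝ → ℝ) (hY : IsYoung Φ)
    (hφ : ∀ t ≥ (0:ℝ), HasDerivWithinAt Φ (φ t) (Set.Ici t) t)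
    (g : EuclideanSpace ℝ (Fin n) → ℝ) (hg : ConvexOn ℝ Set.univ g)
    (c₀ : ℝ) (hc₀ : 0 < c₀) (hgrowth : ∀ ζ, |g ζ| ≤ c₀ * (1 + Φ ‖ζ‖))
    (k δ : ℝ) (hk : 0 < k) (hδ : 0 < δ)
    (hΔ₂ : ∀ t ≥ δ, Φ (2 * t) ≤ k * Φ t) :
    ∃ c > (0:ℝ), ∀ ζ θ : EuclideanSpace ℝ (Fin n),
      |g ζ - g θ| ≤ c * (1 + φ (1 + ‖ζ‖ + ‖θ‖)) * ‖ζ - θ‖ := by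
  have hΦδ := hY.nonneg_s8 hδ.le
  refine ⟨2 * c₀ * (1 + k * (1 + Φ δ)), by positivity, fun ζ θ ↦ ?_⟩
  set r := 1 + ‖ζ‖ + ‖θ‖
  have hr : 1 ≤ r := by simp only [r]; linarith [norm_nonneg ζ, norm_nonneg θ]
  have hbound : ∀ x, ‖x‖ < 2 * r → |g x| ≤ c₀ * (1 + Φ (2 * r)) := fun x hx ↦
    (hgrowth x).trans <| by
      gcongr
      exact hY.monotoneOn_s8 (mem_Ici.mpr (norm_nonneg x)) (mem_Ici.mpr (by positivity)) hx.le
  have hgrowth_r := hY.one_add_apply_two_mul_le hφ hk.le hδ.le hΔ₂ hr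
  calc |g ζ - g θ| ≤ 2 * (c₀ * (1 + Φ (2 * r))) / r * ‖ζ - θ‖ :=
        hg.abs_sub_le_of_abs_le_on_ball (by positivity) hbound
          (by simp only [r]; linarith [norm_nonneg θ]) (by simp only [r]; linarith [norm_nonneg ζ])
    _ ≤ 2 * c₀ * (1 + k * (1 + Φ δ)) * (1 + φ r) * ‖ζ - θ‖ := by
        gcongr
        rw [div_le_iff₀ (by positivity)]
        linarith [mul_le_mul_of_nonneg_left hgrowth_r (by positivity : (0:ℝ) ≤ 2 * c₀)]

/-- Lipschitz-type estimate: a convex `g` with Orlicz growth for a `Δ₂` (for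
large arguments) Young function `Φ` with nondecreasing right derivative `φ`
satisfies `|g(ζ) − g(θ)| ≤ c₀''·(1 + φ(1+‖ζ‖+‖θ‖))·‖ζ−θ‖`. -/
theorem stmt8 (n : ℕ) (Φ φ : ℝ → ℝ) (hY : IsYoung Φ)
    (hφ : ∀ t ≥ (0:ℝ), HasDerivWithinAt Φ (φ t) (Set.Ici t) t)
    (hmono : MonotoneOn φ (Set.Ici 0))
    (g : EuclideanSpace ℝ (Fin n) → ℝ) (hg : ConvexOn ℝ Set.univ g)
    (c₀ : ℝ) (hc₀ : 0 < c₀) (hgrowth : ∀ ζ, |g ζ| ≤ c₀ * (1 + Φ ‖ζ‖))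
    (k δ : ℝ) (hk : 0 < k) (hδ : 0 < δ)
    (hΔ₂ : ∀ t ≥ δ, Φ (2 * t) ≤ k * Φ t) :
    ∃ c > (0:ℝ), ∀ ζ θ : EuclideanSpace ℝ (Fin n),
      |g ζ - g θ| ≤ c * (1 + φ (1 + ‖ζ‖ + ‖θ‖)) * ‖ζ - θ‖ :=
  stmt8_general n Φ φ hY hφ g hg c₀ hc₀ hgrowth k δ hk hδ hΔ₂
end
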